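/- arXiv:2601.09386 — 2 statements merged into one kernel-verified Lean document; each statement's English description precedes it below -/
import Mathlib

section
/- Let p > 2 be a real number and n a positive natural number. There exists a constant c > 0 (depending only on p) such that for all vectors a, b in ℝⁿ, | |a|^{p-2} a − |b|^{p-2} b | ≤ c (|a|^{p-2} + |b|^{p-2}) |a − b|. -/
/-!
Write `q = p - 2` and assume `‖b‖ ≤ ‖a‖`. Splitting
`‖a‖^q a - ‖b‖^q b = ‖a‖^q (a - b) + (‖a‖^q - ‖b‖^q) b`, the only term to control is
`‖b‖ (‖a‖^q - ‖b‖^q) ≤ ‖a‖^(q+1) - ‖b‖^(q+1)`, and convexity of `t ↦ t^(q+1)` (Bernoulli's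
inequality) bounds this by `(q+1) ‖a‖^q (‖a‖ - ‖b‖) ≤ (q+1) ‖a‖^q ‖a - b‖`. So `c = p` works.
-/

open Real

lemma Real.rpow_add_one_sub_rpow_add_one_le {q x y : ℝ} (hq : 0 ≤ q) (hy : 0 ≤ y) (hyx : y ≤ x) :
    x ^ (q + 1) - y ^ (q + 1) ≤ (q + 1) * x ^ q * (x - y) := by
  rcases (hy.trans hyx).eq_or_lt with rfl | hx
  · simp [le_antisymm hyx hy]
  have bernoulli : 1 + (q + 1) * (y / x - 1) ≤ y ^ (q + 1) / x ^ (q + 1) := by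
    rw [← div_rpow hy hx.le]
    simpa using one_add_mul_self_le_rpow_one_add (s := y / x - 1)
      (by linarith [div_nonneg hy hx.le]) (by linarith : 1 ≤ q + 1)
  rw [le_div_iff₀ (by positivity), rpow_add_one hx.ne'] at bernoulli
  rw [rpow_add_one hx.ne']
  have hscale : x ^ q * x * (y / x - 1) = x ^ q * (y - x) := by field_simp
  nlinarith

lemma norm_rpow_smul_sub_rpow_smul_le_of_norm_le {E : Type*} [NormedAddCommGroup E]
    [NormedSpace ℝ E] {q : ℝ} (hq : 0 ≤ q) {a b : E} (hba : ‖b‖ ≤ ‖a‖) :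
    ‖‖a‖ ^ q • a - ‖b‖ ^ q • b‖ ≤ (q + 2) * ‖a‖ ^ q * ‖a - b‖ := by
  have hpow : ‖b‖ ^ q ≤ ‖a‖ ^ q := rpow_le_rpow (norm_nonneg b) hba hq
  have hsplit : ‖a‖ ^ q • a - ‖b‖ ^ q • b = ‖a‖ ^ q • (a - b) + (‖a‖ ^ q - ‖b‖ ^ q) • b := by
    rw [smul_sub, sub_smul]; abel
  have hcross : ‖b‖ * (‖a‖ ^ q - ‖b‖ ^ q) ≤ (q + 1) * ‖a‖ ^ q * ‖a - b‖ :=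
    calc ‖b‖ * (‖a‖ ^ q - ‖b‖ ^ q)
        ≤ ‖a‖ ^ (q + 1) - ‖b‖ ^ (q + 1) := by
          rw [rpow_add_one' (norm_nonneg a) (by linarith),
            rpow_add_one' (norm_nonneg b) (by linarith)]
          nlinarith [rpow_nonneg (norm_nonneg a) q]
      _ ≤ (q + 1) * ‖a‖ ^ q * (‖a‖ - ‖b‖) :=
          rpow_add_one_sub_rpow_add_one_le hq (norm_nonneg b) hba
      _ ≤ (q + 1) * ‖a‖ ^ q * ‖a - b‖ := by
          gcongr
          exact norm_sub_norm_le a b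
  calc ‖‖a‖ ^ q • a - ‖b‖ ^ q • b‖
      ≤ ‖a‖ ^ q * ‖a - b‖ + ‖b‖ * (‖a‖ ^ q - ‖b‖ ^ q) := by
        rw [hsplit]
        refine (norm_add_le _ _).trans_eq ?_
        rw [norm_smul, norm_smul, norm_of_nonneg (rpow_nonneg (norm_nonneg a) q),
          norm_of_nonneg (sub_nonneg.mpr hpow), mul_comm ‖b‖]
    _ ≤ (q + 2) * ‖a‖ ^ q * ‖a - b‖ := by linarith

lemma norm_rpow_smul_sub_rpow_smul_le {E : Type*} [NormedAddCommGroup E] [NormedSpace ℝ E]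
    {q : ℝ} (hq : 0 ≤ q) (a b : E) :
    ‖‖a‖ ^ q • a - ‖b‖ ^ q • b‖ ≤ (q + 2) * (‖a‖ ^ q + ‖b‖ ^ q) * ‖a - b‖ := by
  have hnonneg : 0 ≤ (q + 2) * ‖a - b‖ := by positivity
  rcases le_total ‖b‖ ‖a‖ with hba | hab
  · have := norm_rpow_smul_sub_rpow_smul_le_of_norm_le hq hba
    nlinarith [rpow_nonneg (norm_nonneg b) q]
  · have := norm_rpow_smul_sub_rpow_smul_le_of_norm_le hq hab
    rw [norm_sub_rev, norm_sub_rev b] at this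
    nlinarith [rpow_nonneg (norm_nonneg a) q]

/-- Lipschitz-type estimate for the p-Laplace vector field (inequality (2.2) of Lemma 2.8):
for `p > 2` there is `c > 0` depending only on `p` such that for all `a b : ℝⁿ`,
`| |a|^{p-2} a − |b|^{p-2} b | ≤ c (|a|^{p-2} + |b|^{p-2}) |a − b|`. -/
theorem pLaplace_lipschitz (p : ℝ) (hp : 2 < p) :
    ∃ c : ℝ, 0 < c ∧ ∀ (n : ℕ), 0 < n → ∀ a b : EuclideanSpace ℝ (Fin n),
      ‖‖a‖ ^ (p - 2) • a - ‖b‖ ^ (p - 2) • b‖ ≤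
        c * (‖a‖ ^ (p - 2) + ‖b‖ ^ (p - 2)) * ‖a - b‖ := by
  refine ⟨p, by linarith, fun n _ a b => ?_⟩
  simpa using norm_rpow_smul_sub_rpow_smul_le (sub_nonneg.mpr hp.le) a b
end

section
/- Let n ≥ 2, let U be a convex subset of ℝ^{n-1}, and let f : U → ℝ be differentiable with gradient ∇f satisfying |∇f(z)| ≤ M for all z ∈ U and |∇f(z) − ∇f(w)| ≤ L |z − w| for all z, w ∈ U, where M, L ≥ 0. Define φ : U → ℝⁿ by φ(z) = (z, f(z)) and ν : U → ℝⁿ by ν(z) = (−∇f(z), 1)/√(1 + |∇f(z)|²). Then there exists a constant c > 0, depending only on M and L, such that for all z₁, z₂ ∈ U, |(φ(z₁) − φ(z₂)) · ν(z₁)| ≤ c |z₁ − z₂|². -/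
lemma seg_norm_le {E : Type*} [NormedAddCommGroup E] [NormedSpace ℝ E]
    {z₁ z₂ x : E} (hx : x ∈ segment ℝ z₁ z₂) : ‖x - z₁‖ ≤ ‖z₂ - z₁‖ := by
  obtain ⟨a, b, ha, hb, hab, rfl⟩ := hx
  have : a • z₁ + b • z₂ - z₁ = b • (z₂ - z₁) := by
    rw [smul_sub]; rw [show a = 1 - b by linarith]; module
  rw [this, norm_smul, Real.norm_eq_abs, abs_of_nonneg hb]
  nlinarith [norm_nonneg (z₂ - z₁)]

/-- Second-order estimate from the proof of Lemma 9.5: for a graph `φ(z) = (z, f(z))` over a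
convex set `U ⊆ ℝ^{n-1}` with gradient bounded by `M` and Lipschitz with constant `L`, the
inner product of a chord of the graph with the unit normal
`ν(z) = (−∇f(z), 1)/√(1 + |∇f(z)|²)` at one endpoint is quadratically small, with a constant
depending only on `M` and `L`. -/
theorem graph_chord_normal_estimate (M L : ℝ) (hM : 0 ≤ M) (hL : 0 ≤ L) :
    ∃ c : ℝ, 0 < c ∧ ∀ (n : ℕ), 2 ≤ n →
      ∀ (U : Set (EuclideanSpace ℝ (Fin (n - 1)))), Convex ℝ U →
      ∀ (f : EuclideanSpace ℝ (Fin (n - 1)) → ℝ)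
        (f' : EuclideanSpace ℝ (Fin (n - 1)) → EuclideanSpace ℝ (Fin (n - 1))),
        (∀ z ∈ U, HasGradientWithinAt f (f' z) U z) →
        (∀ z ∈ U, ‖f' z‖ ≤ M) →
        (∀ z ∈ U, ∀ w ∈ U, ‖f' z - f' w‖ ≤ L * ‖z - w‖) →
        ∀ z₁ ∈ U, ∀ z₂ ∈ U,
          |(inner ℝ
              ((WithLp.equiv 2 (EuclideanSpace ℝ (Fin (n - 1)) × ℝ)).symm (z₁, f z₁) -
                (WithLp.equiv 2 (EuclideanSpace ℝ (Fin (n - 1)) × ℝ)).symm (z₂, f z₂))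
              ((Real.sqrt (1 + ‖f' z₁‖ ^ 2))⁻¹ •
                (WithLp.equiv 2 (EuclideanSpace ℝ (Fin (n - 1)) × ℝ)).symm (-f' z₁, 1)) : ℝ)| ≤
            c * ‖z₁ - z₂‖ ^ 2 := by
  refine ⟨L + 1, by linarith, ?_⟩
  intro n hn U hU f f' hdiff hMb hLip z₁ hz₁ z₂ hz₂
  have hsegU : segment ℝ z₁ z₂ ⊆ U := hU.segment_subset hz₁ hz₂
  have key : ‖f z₂ - f z₁ -
      (InnerProductSpace.toDual ℝ (EuclideanSpace ℝ (Fin (n - 1))) (f' z₁)) (z₂ - z₁)‖ ≤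
      (L * ‖z₂ - z₁‖) * ‖z₂ - z₁‖ := by
    apply Convex.norm_image_sub_le_of_norm_hasFDerivWithin_le'
      (f' := fun x => InnerProductSpace.toDual ℝ _ (f' x))
      (fun x hx => ((hdiff x (hsegU hx)).hasFDerivWithinAt).mono hsegU)
      (fun x hx => ?_) (convex_segment z₁ z₂) (left_mem_segment ℝ z₁ z₂)
      (right_mem_segment ℝ z₁ z₂)
    rw [← map_sub, (InnerProductSpace.toDual ℝ _).norm_map]
    calc ‖f' x - f' z₁‖ ≤ L * ‖x - z₁‖ := hLip x (hsegU hx) z₁ hz₁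
      _ ≤ L * ‖z₂ - z₁‖ := mul_le_mul_of_nonneg_left (seg_norm_le hx) hL
  have hdual : (InnerProductSpace.toDual ℝ (EuclideanSpace ℝ (Fin (n - 1))) (f' z₁)) (z₂ - z₁) =
      (inner ℝ (f' z₁) (z₂ - z₁) : ℝ) := rfl
  rw [hdual] at key
  set s : ℝ := Real.sqrt (1 + ‖f' z₁‖ ^ 2) with hs
  have hs1 : (1 : ℝ) ≤ s := by
    rw [hs, Real.one_le_sqrt]
    nlinarith [sq_nonneg ‖f' z₁‖]
  have hinner : (inner ℝ
      ((WithLp.equiv 2 (EuclideanSpace ℝ (Fin (n - 1)) × ℝ)).symm (z₁, f z₁) -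
        (WithLp.equiv 2 (EuclideanSpace ℝ (Fin (n - 1)) × ℝ)).symm (z₂, f z₂))
      (s⁻¹ • (WithLp.equiv 2 (EuclideanSpace ℝ (Fin (n - 1)) × ℝ)).symm (-f' z₁, 1)) : ℝ) =
      s⁻¹ * ((inner ℝ (f' z₁) (z₂ - z₁) : ℝ) - (f z₂ - f z₁)) := by
    rw [real_inner_smul_right, WithLp.prod_inner_apply]
    have h1 : (inner ℝ
        (((WithLp.equiv 2 (EuclideanSpace ℝ (Fin (n - 1)) × ℝ)).symm (z₁, f z₁) -
          (WithLp.equiv 2 (EuclideanSpace ℝ (Fin (n - 1)) × ℝ)).symm (z₂, f z₂)).ofLp.1)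
        (((WithLp.equiv 2 (EuclideanSpace ℝ (Fin (n - 1)) × ℝ)).symm (-f' z₁, 1) :
          WithLp 2 (EuclideanSpace ℝ (Fin (n - 1)) × ℝ)).ofLp.1) : ℝ) =
        (inner ℝ (z₁ - z₂) (-f' z₁) : ℝ) := rfl
    have h2 : (inner ℝ
        (((WithLp.equiv 2 (EuclideanSpace ℝ (Fin (n - 1)) × ℝ)).symm (z₁, f z₁) -
          (WithLp.equiv 2 (EuclideanSpace ℝ (Fin (n - 1)) × ℝ)).symm (z₂, f z₂)).ofLp.2)
        (((WithLp.equiv 2 (EuclideanSpace ℝ (Fin (n - 1)) × ℝ)).symm (-f' z₁, 1) :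
          WithLp 2 (EuclideanSpace ℝ (Fin (n - 1)) × ℝ)).ofLp.2) : ℝ) =
        (f z₁ - f z₂) * 1 := by simp [mul_comm]
    rw [h1, h2]
    have h3 : (inner ℝ (z₁ - z₂) (-f' z₁) : ℝ) = (inner ℝ (f' z₁) (z₂ - z₁) : ℝ) := by
      rw [inner_neg_right, real_inner_comm, ← inner_neg_right, neg_sub]
    rw [h3]; ring
  rw [hinner, abs_mul]
  have hsinv : |s⁻¹| ≤ 1 := by
    rw [abs_of_nonneg (by positivity)]
    exact inv_le_one_of_one_le₀ hs1
  have habs : |(inner ℝ (f' z₁) (z₂ - z₁) : ℝ) - (f z₂ - f z₁)| ≤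
      (L * ‖z₂ - z₁‖) * ‖z₂ - z₁‖ := by
    rw [show (inner ℝ (f' z₁) (z₂ - z₁) : ℝ) - (f z₂ - f z₁) =
      -(f z₂ - f z₁ - (inner ℝ (f' z₁) (z₂ - z₁) : ℝ)) by ring, abs_neg]
    exact key
  have hnn : ‖z₂ - z₁‖ = ‖z₁ - z₂‖ := norm_sub_rev _ _
  calc |s⁻¹| * |(inner ℝ (f' z₁) (z₂ - z₁) : ℝ) - (f z₂ - f z₁)| ≤
      1 * ((L * ‖z₂ - z₁‖) * ‖z₂ - z₁‖) :=
        mul_le_mul hsinv habs (abs_nonneg _) zero_le_one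
    _ = L * ‖z₁ - z₂‖ ^ 2 := by rw [hnn]; ring
    _ ≤ (L + 1) * ‖z₁ - z₂‖ ^ 2 := by nlinarith [sq_nonneg ‖z₁ - z₂‖]
end
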